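/- Let V be a maximal isotropic subspace with respect to ω, let ψ₀ be a stabilizer state for V, let K : ℕ with 0 < K ≤ 2^p, and let (c_j, d_j), j : Fin K, be labels lying in pairwise distinct cosets of V (i.e. (c_j + c_k, d_j + d_k) ∉ V for j ≠ k). Then the basis codewords ψ_j = σ(c_j,d_j).mulVec ψ₀ are pairwise orthogonal and each nonzero; consequently they are linearly independent over ℂ and span a K-dimensional code subspace [[p,K]] of ℂ^(2^p). (Paper's Theorem 2: every Cartan subalgebra of su(2^p) decides quantum codes [[p,K]] for every 0 < K ≤ 2^p.) -/

import Mathlib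

open Matrix BigOperators

/-- The mod-2 dot product of two bitstrings. -/
def dotp {p : ℕ} (a b : Fin p → ZMod 2) : ZMod 2 := ∑ i, a i * b i

/-- The sign `(-1)^t` for `t : ZMod 2`. -/
noncomputable def sgn (t : ZMod 2) : ℂ := (-1 : ℂ) ^ t.val

/-- The Pauli spinor matrix `σ(a,b)`, representing `⊗ᵢ X^(a i) Z^(b i)`:
`σ(a,b) x y = (-1)^(b⬝x)` if `y = x + a` and `0` otherwise. -/
noncomputable def pauli {p : ℕ} (a b : Fin p → ZMod 2) :
    Matrix (Fin p → ZMod 2) (Fin p → ZMod 2) ℂ :=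
  fun x y => if y = x + a then sgn (dotp b x) else 0

/-- The symplectic form `ω((a,b),(c,d)) = a⬝d + b⬝c` on pairs of bitstrings. -/
def omegaF {p : ℕ} (u v : (Fin p → ZMod 2) × (Fin p → ZMod 2)) : ZMod 2 :=
  dotp u.1 v.2 + dotp u.2 v.1

/-- A subspace is isotropic if `ω` vanishes on all pairs of its elements. -/
def IsIsotropic {p : ℕ}
    (V : Submodule (ZMod 2) ((Fin p → ZMod 2) × (Fin p → ZMod 2))) : Prop :=
  ∀ u ∈ V, ∀ v ∈ V, omegaF u v = 0

/-- A maximal isotropic subspace: isotropic and not properly contained in any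
isotropic subspace. -/
def IsMaxIsotropic {p : ℕ}
    (V : Submodule (ZMod 2) ((Fin p → ZMod 2) × (Fin p → ZMod 2))) : Prop :=
  IsIsotropic V ∧ ∀ W, IsIsotropic W → V ≤ W → W = V


/-!
Pauli matrices have real entries and multiply as `σ(a,b) σ(c,d) = (-1)^(d⬝a) σ(a+c, b+d)`, so they
are unitary and two of them commute or anticommute according to `ω`. If `w ∉ V`, maximality of `V`
yields `u ∈ V` with `ω(u,w) = 1`; then `σ(w)` anticommutes with `σ(u)`, which fixes `ψ₀`, so
`⟪ψ₀, σ(w) ψ₀⟫ = -⟪ψ₀, σ(w) ψ₀⟫ = 0`. Since `σ(c_j,d_j)ᴴ σ(c_k,d_k)` is `±σ((c_j,d_j) + (c_k,d_k))`,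
this makes the codewords pairwise orthogonal; they are nonzero by unitarity, hence independent.
-/

lemma zmod_two_eq_zero_or_one (t : ZMod 2) : t = 0 ∨ t = 1 := by
  revert t; decide

lemma sgn_add (s t : ZMod 2) : sgn (s + t) = sgn s * sgn t := by
  rw [sgn, sgn, sgn, ZMod.val_add, ← neg_one_pow_eq_pow_mod_two, pow_add]

lemma sgn_one : sgn 1 = -1 := by simp [sgn, ZMod.val_one]

lemma sgn_mul_self (s : ZMod 2) : sgn s * sgn s = 1 := by
  rw [← sgn_add, CharTwo.add_self_eq_zero]; simp [sgn]

lemma star_sgn (t : ZMod 2) : star (sgn t) = sgn t := by simp [sgn]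

section Pauli

variable {p : ℕ}

lemma dotp_comm (a b : Fin p → ZMod 2) : dotp a b = dotp b a := dotProduct_comm a b

lemma dotp_add_left (a b c : Fin p → ZMod 2) : dotp (a + b) c = dotp a c + dotp b c :=
  add_dotProduct a b c

lemma dotp_add_right (a b c : Fin p → ZMod 2) : dotp a (b + c) = dotp a b + dotp a c :=
  dotProduct_add a b c

lemma dotp_smul_left (t : ZMod 2) (a b : Fin p → ZMod 2) : dotp (t • a) b = t * dotp a b :=
  smul_dotProduct t a b

lemma bitstring_add_self (a : Fin p → ZMod 2) : a + a = 0 :=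
  funext fun i => CharTwo.add_self_eq_zero (a i)

lemma pauli_mul (a b c d : Fin p → ZMod 2) :
    pauli a b * pauli c d = sgn (dotp d a) • pauli (a + c) (b + d) := by
  ext x y
  rw [mul_apply, Finset.sum_eq_single (x + a) (fun z _ hz => by simp [pauli, hz])
    (fun h => absurd (Finset.mem_univ _) h)]
  simp only [pauli, Matrix.smul_apply, smul_eq_mul, if_true, ← add_assoc]
  split_ifs
  · rw [dotp_add_right, dotp_add_left, sgn_add, sgn_add]; ring
  · rw [mul_zero, mul_zero]

lemma pauli_zero : pauli (0 : Fin p → ZMod 2) 0 = 1 := by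
  ext x y
  simp [pauli, one_apply, dotp, sgn, eq_comm]

lemma conjTranspose_pauli (a b : Fin p → ZMod 2) :
    (pauli a b)ᴴ = sgn (dotp b a) • pauli a b := by
  ext x y
  simp only [conjTranspose_apply, pauli, Matrix.smul_apply, smul_eq_mul]
  by_cases h : y = x + a
  · have h' : x = y + a := by rw [h, add_assoc, bitstring_add_self, add_zero]
    rw [if_pos h', if_pos h, star_sgn, h, dotp_add_right, sgn_add, mul_comm]
  · have h' : x ≠ y + a := fun h' => h (by rw [h', add_assoc, bitstring_add_self, add_zero])
    rw [if_neg h', if_neg h, star_zero, mul_zero]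

lemma conjTranspose_pauli_mul_pauli (a b c d : Fin p → ZMod 2) :
    (pauli a b)ᴴ * pauli c d = sgn (dotp b a + dotp d a) • pauli (a + c) (b + d) := by
  rw [conjTranspose_pauli, smul_mul, pauli_mul, smul_smul, sgn_add]

lemma conjTranspose_pauli_mul_self (a b : Fin p → ZMod 2) : (pauli a b)ᴴ * pauli a b = 1 := by
  rw [conjTranspose_pauli_mul_pauli, sgn_add, sgn_mul_self, bitstring_add_self,
    bitstring_add_self, pauli_zero, one_smul]

lemma pauli_mul_comm (u w : (Fin p → ZMod 2) × (Fin p → ZMod 2)) :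
    pauli u.1 u.2 * pauli w.1 w.2 = sgn (omegaF u w) • (pauli w.1 w.2 * pauli u.1 u.2) := by
  rw [pauli_mul, pauli_mul, smul_smul, omegaF, sgn_add, add_comm w.1, add_comm w.2,
    dotp_comm u.1]
  congr 1
  linear_combination (sgn (dotp w.2 u.1)) * (sgn_mul_self (dotp u.2 w.1)).symm

lemma pauli_mulVec_ne_zero (a b : Fin p → ZMod 2) {ψ : (Fin p → ZMod 2) → ℂ} (hψ : ψ ≠ 0) :
    pauli a b *ᵥ ψ ≠ 0 := fun h =>
  hψ <| by rw [← one_mulVec ψ, ← conjTranspose_pauli_mul_self a b, ← mulVec_mulVec, h, mulVec_zero]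

end Pauli

section Symplectic

variable {p : ℕ}

lemma omegaF_comm (u v : (Fin p → ZMod 2) × (Fin p → ZMod 2)) : omegaF u v = omegaF v u := by
  rw [omegaF, omegaF, dotp_comm u.1, dotp_comm u.2, add_comm]

lemma omegaF_self (u : (Fin p → ZMod 2) × (Fin p → ZMod 2)) : omegaF u u = 0 := by
  rw [omegaF, dotp_comm u.2, CharTwo.add_self_eq_zero]

lemma omegaF_add_left (u v w : (Fin p → ZMod 2) × (Fin p → ZMod 2)) :
    omegaF (u + v) w = omegaF u w + omegaF v w := by
  simp only [omegaF, Prod.fst_add, Prod.snd_add, dotp_add_left]; ring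

lemma omegaF_add_right (u v w : (Fin p → ZMod 2) × (Fin p → ZMod 2)) :
    omegaF u (v + w) = omegaF u v + omegaF u w := by
  rw [omegaF_comm, omegaF_add_left, omegaF_comm v, omegaF_comm w]

lemma omegaF_smul_left (t : ZMod 2) (u v : (Fin p → ZMod 2) × (Fin p → ZMod 2)) :
    omegaF (t • u) v = t * omegaF u v := by
  rw [omegaF, omegaF, mul_add, Prod.smul_fst, Prod.smul_snd, dotp_smul_left, dotp_smul_left]

lemma omegaF_smul_right (t : ZMod 2) (u v : (Fin p → ZMod 2) × (Fin p → ZMod 2)) :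
    omegaF u (t • v) = t * omegaF u v := by
  rw [omegaF_comm, omegaF_smul_left, omegaF_comm]

lemma IsIsotropic.sup_span_singleton {V : Submodule (ZMod 2) ((Fin p → ZMod 2) × (Fin p → ZMod 2))}
    (hV : IsIsotropic V) {w : (Fin p → ZMod 2) × (Fin p → ZMod 2)} (hw : ∀ u ∈ V, omegaF u w = 0) :
    IsIsotropic (V ⊔ Submodule.span (ZMod 2) {w}) := by
  intro x hx y hy
  obtain ⟨v₁, hv₁, _, ht₁, rfl⟩ := Submodule.mem_sup.mp hx
  obtain ⟨v₂, hv₂, _, ht₂, rfl⟩ := Submodule.mem_sup.mp hy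
  obtain ⟨t₁, rfl⟩ := Submodule.mem_span_singleton.mp ht₁
  obtain ⟨t₂, rfl⟩ := Submodule.mem_span_singleton.mp ht₂
  simp only [omegaF_add_left, omegaF_add_right, omegaF_smul_left, omegaF_smul_right,
    omegaF_comm w, hV v₁ hv₁ v₂ hv₂, hw v₁ hv₁, hw v₂ hv₂, omegaF_self]
  ring

lemma IsMaxIsotropic.exists_omegaF_eq_one {V : Submodule (ZMod 2) ((Fin p → ZMod 2) × (Fin p → ZMod 2))}
    (hV : IsMaxIsotropic V) {w : (Fin p → ZMod 2) × (Fin p → ZMod 2)} (hw : w ∉ V) :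
    ∃ u ∈ V, omegaF u w = 1 := by
  by_contra! h
  have hw' : ∀ u ∈ V, omegaF u w = 0 := fun u hu =>
    (zmod_two_eq_zero_or_one _).resolve_right (h u hu)
  have hsup := hV.2 _ (hV.1.sup_span_singleton hw') le_sup_left
  exact hw (hsup ▸ Submodule.mem_sup_right (Submodule.mem_span_singleton_self w))

end Symplectic

section StarDotProduct

variable {n : Type*} [Fintype n]

lemma star_mulVec_dotProduct_mulVec {R : Type*} [CommSemiring R] [StarRing R]
    (A B : Matrix n n R) (v w : n → R) :
    star (A *ᵥ v) ⬝ᵥ (B *ᵥ w) = star v ⬝ᵥ ((Aᴴ * B) *ᵥ w) := by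
  rw [star_mulVec, ← dotProduct_mulVec, mulVec_mulVec]

lemma star_dotProduct_mulVec_eq_zero_of_anticommute [DecidableEq n] {R : Type*} [CommRing R]
    [StarRing R] [IsAddTorsionFree R] {U A : Matrix n n R} {ψ : n → R} (hU : Uᴴ * U = 1)
    (hψ : U *ᵥ ψ = ψ) (hAU : A * U = -(U * A)) : star ψ ⬝ᵥ (A *ᵥ ψ) = 0 := by
  refine self_eq_neg.mp ?_
  calc star ψ ⬝ᵥ (A *ᵥ ψ) = star (U *ᵥ ψ) ⬝ᵥ ((A * U) *ᵥ ψ) := by rw [← mulVec_mulVec, hψ]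
    _ = -(star ψ ⬝ᵥ (A *ᵥ ψ)) := by
      rw [hAU, neg_mulVec, dotProduct_neg, ← mulVec_mulVec, star_mulVec_dotProduct_mulVec, hU,
        one_mulVec]

lemma linearIndependent_of_ne_zero_of_star_dotProduct_eq_zero {𝕜 ι : Type*} [RCLike 𝕜]
    {v : ι → n → 𝕜} (hz : ∀ i, v i ≠ 0) (ho : Pairwise fun i j => star (v i) ⬝ᵥ v j = 0) :
    LinearIndependent 𝕜 v := by
  refine LinearIndependent.of_comp (WithLp.linearEquiv 2 𝕜 (n → 𝕜)).symm.toLinearMap ?_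
  refine linearIndependent_of_ne_zero_of_inner_eq_zero (fun i => ?_) fun i j hij => ?_
  · simpa using hz i
  · simpa [EuclideanSpace.inner_toLp_toLp, dotProduct_comm] using ho hij

end StarDotProduct

section Stabilizer

variable {p : ℕ} {V : Submodule (ZMod 2) ((Fin p → ZMod 2) × (Fin p → ZMod 2))}
  {ψ₀ : (Fin p → ZMod 2) → ℂ}

lemma IsMaxIsotropic.star_dotProduct_pauli_mulVec_eq_zero (hV : IsMaxIsotropic V)
    (hstab : ∀ u ∈ V, pauli u.1 u.2 *ᵥ ψ₀ = ψ₀) {w : (Fin p → ZMod 2) × (Fin p → ZMod 2)}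
    (hw : w ∉ V) : star ψ₀ ⬝ᵥ (pauli w.1 w.2 *ᵥ ψ₀) = 0 := by
  obtain ⟨u, hu, hωu⟩ := hV.exists_omegaF_eq_one hw
  refine star_dotProduct_mulVec_eq_zero_of_anticommute (conjTranspose_pauli_mul_self u.1 u.2)
    (hstab u hu) ?_
  rw [pauli_mul_comm, omegaF_comm, hωu, sgn_one, neg_one_smul]

lemma IsMaxIsotropic.star_pauli_mulVec_dotProduct_pauli_mulVec_eq_zero (hV : IsMaxIsotropic V)
    (hstab : ∀ u ∈ V, pauli u.1 u.2 *ᵥ ψ₀ = ψ₀) {u w : (Fin p → ZMod 2) × (Fin p → ZMod 2)}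
    (huw : u + w ∉ V) : star (pauli u.1 u.2 *ᵥ ψ₀) ⬝ᵥ (pauli w.1 w.2 *ᵥ ψ₀) = 0 := by
  have h := hV.star_dotProduct_pauli_mulVec_eq_zero hstab huw
  rw [Prod.fst_add, Prod.snd_add] at h
  rw [star_mulVec_dotProduct_mulVec, conjTranspose_pauli_mul_pauli, smul_mulVec, dotProduct_smul,
    h, smul_zero]

end Stabilizer

theorem code_subspace_dim_general {p : ℕ}
    (V : Submodule (ZMod 2) ((Fin p → ZMod 2) × (Fin p → ZMod 2)))
    (hV : IsMaxIsotropic V) (ψ₀ : (Fin p → ZMod 2) → ℂ) (hψ₀ : ψ₀ ≠ 0)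
    (hstab : ∀ u ∈ V, (pauli u.1 u.2).mulVec ψ₀ = ψ₀)
    (K : ℕ)
    (cd : Fin K → (Fin p → ZMod 2) × (Fin p → ZMod 2))
    (hdist : ∀ j k, j ≠ k → cd j + cd k ∉ V) :
    (∀ j k, j ≠ k →
        (∑ x, (starRingEnd ℂ) ((pauli (cd j).1 (cd j).2).mulVec ψ₀ x) *
          (pauli (cd k).1 (cd k).2).mulVec ψ₀ x) = 0) ∧
    (∀ j, (pauli (cd j).1 (cd j).2).mulVec ψ₀ ≠ 0) ∧
    LinearIndependent ℂ (fun j : Fin K => (pauli (cd j).1 (cd j).2).mulVec ψ₀) ∧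
    Module.finrank ℂ
        (Submodule.span ℂ
          (Set.range fun j : Fin K => (pauli (cd j).1 (cd j).2).mulVec ψ₀)) = K := by
  have horth : ∀ j k, j ≠ k →
      star (pauli (cd j).1 (cd j).2 *ᵥ ψ₀) ⬝ᵥ (pauli (cd k).1 (cd k).2 *ᵥ ψ₀) = 0 :=
    fun j k hjk => hV.star_pauli_mulVec_dotProduct_pauli_mulVec_eq_zero hstab (hdist j k hjk)
  have hnz : ∀ j, pauli (cd j).1 (cd j).2 *ᵥ ψ₀ ≠ 0 := fun j => pauli_mulVec_ne_zero _ _ hψ₀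
  have hli := linearIndependent_of_ne_zero_of_star_dotProduct_eq_zero hnz horth
  exact ⟨horth, hnz, hli, by rw [finrank_span_eq_card hli, Fintype.card_fin]⟩

/-- Paper's Theorem 2: Given a stabilizer state `ψ₀` of a maximal
isotropic subspace `V`, `0 < K ≤ 2^p`, and labels `cd j` lying in pairwise distinct
cosets of `V`, the basis codewords `ψ_j = σ(c_j,d_j).mulVec ψ₀` are pairwise orthogonal
and nonzero; consequently they are linearly independent and span a `K`-dimensional code
subspace `[[p,K]]` of `ℂ^(2^p)`. -/
theorem code_subspace_dim {p : ℕ} (hp : 1 ≤ p)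
    (V : Submodule (ZMod 2) ((Fin p → ZMod 2) × (Fin p → ZMod 2)))
    (hV : IsMaxIsotropic V) (ψ₀ : (Fin p → ZMod 2) → ℂ) (hψ₀ : ψ₀ ≠ 0)
    (hstab : ∀ u ∈ V, (pauli u.1 u.2).mulVec ψ₀ = ψ₀)
    (K : ℕ) (hK : 0 < K) (hK' : K ≤ 2 ^ p)
    (cd : Fin K → (Fin p → ZMod 2) × (Fin p → ZMod 2))
    (hdist : ∀ j k, j ≠ k → cd j + cd k ∉ V) :
    (∀ j k, j ≠ k →
        (∑ x, (starRingEnd ℂ) ((pauli (cd j).1 (cd j).2).mulVec ψ₀ x) *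
          (pauli (cd k).1 (cd k).2).mulVec ψ₀ x) = 0) ∧
    (∀ j, (pauli (cd j).1 (cd j).2).mulVec ψ₀ ≠ 0) ∧
    LinearIndependent ℂ (fun j : Fin K => (pauli (cd j).1 (cd j).2).mulVec ψ₀) ∧
    Module.finrank ℂ
        (Submodule.span ℂ
          (Set.range fun j : Fin K => (pauli (cd j).1 (cd j).2).mulVec ψ₀)) = K :=
  code_subspace_dim_general V hV ψ₀ hψ₀ hstab K cd hdist
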